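/- arXiv:2312.04812 — 3 statements merged into one kernel-verified Lean document; each statement's English description precedes it below -/
import Mathlib

section
/- For the perspective function f(x,y) = y²/x (with f(0,0)=0, +∞ elsewhere on the boundary), a pair (Φ,Ψ) is a subgradient of f at the point (0,0) if and only if Φ ≤ -Ψ²/4. -/
/-- The perspective function `f(x,y) = y²/x` for `x > 0`, with `f(0,0) = 0`
and `+∞` elsewhere. -/
noncomputable def persp : ℝ × ℝ → EReal := fun p =>
  if 0 < p.1 then ((p.2 ^ 2 / p.1 : ℝ) : EReal)
  else if p.1 = 0 ∧ p.2 = 0 then 0 else ⊤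

theorem persp_zero : persp (0, 0) = 0 := by
  simp [persp]

theorem persp_of_pos {x : ℝ} (hx : 0 < x) (y : ℝ) : persp (x, y) = ((y ^ 2 / x : ℝ) : EReal) :=
  if_pos hx

theorem persp_eq_top {x y : ℝ} (hx : ¬0 < x) (hxy : ¬(x = 0 ∧ y = 0)) :
    persp (x, y) = ⊤ :=
  (if_neg hx).trans (if_neg hxy)

theorem mul_add_mul_le_sq_div {Φ Ψ x : ℝ} (y : ℝ) (hΦ : Φ ≤ -Ψ ^ 2 / 4) (hx : 0 < x) :
    Φ * x + Ψ * y ≤ y ^ 2 / x := by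
  have hsq : y ^ 2 / x - Ψ * y + Ψ ^ 2 * x / 4 = (y - Ψ * x / 2) ^ 2 / x := by
    field_simp
    ring
  have : 0 ≤ (y - Ψ * x / 2) ^ 2 / x := by positivity
  nlinarith

/-- `(Φ,Ψ)` is a subgradient of the perspective function at `(0,0)`
iff `Φ ≤ -Ψ²/4`. -/
theorem persp_subgradient_at_zero (Φ Ψ : ℝ) :
    (∀ p : ℝ × ℝ, persp (0, 0) + (((Φ * (p.1 - 0) + Ψ * (p.2 - 0) : ℝ)) : EReal) ≤ persp p)
      ↔ Φ ≤ -Ψ ^ 2 / 4 := by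
  simp only [persp_zero, zero_add, sub_zero]
  constructor
  · intro h
    -- at `x = 1` the bound reads `Φ ≤ y² - Ψ y`, whose minimum `-Ψ²/4` is at `y = Ψ/2`
    have h₁ := h (1, Ψ / 2)
    rw [persp_of_pos one_pos, EReal.coe_le_coe_iff] at h₁
    nlinarith
  · rintro hΦ ⟨x, y⟩
    by_cases hx : 0 < x
    · rw [persp_of_pos hx, EReal.coe_le_coe_iff]
      exact mul_add_mul_le_sq_div y hΦ hx
    by_cases hxy : x = 0 ∧ y = 0
    · obtain ⟨rfl, rfl⟩ := hxy
      simp [persp_zero]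
    · rw [persp_eq_top hx hxy]
      exact le_top
end

section
/- The function f₁ : ℝ≥0 × ℝ → ℝ ∪ {+∞} defined by f₁(x,y) = x·exp(-y/x) for x > 0, f₁(0,y) = 0 for y ≥ 0, and f₁(0,y) = +∞ for y < 0, is a convex function. -/
/-- Perspective inequality for `exp` in the interior case. -/
lemma key_real (x1 x2 y1 y2 a b : ℝ) (hx1 : 0 < x1) (hx2 : 0 < x2) (ha : 0 ≤ a)
    (hb : 0 ≤ b) (hab : a + b = 1) :
    (a*x1+b*x2) * Real.exp (-(a*y1+b*y2)/(a*x1+b*x2)) ≤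
      a*(x1*Real.exp (-y1/x1)) + b*(x2*Real.exp (-y2/x2)) := by
  set s := a*x1+b*x2 with hs
  have hspos : 0 < s := by
    rcases eq_or_lt_of_le ha with rfl | ha'
    · simp at hab; simp [hs, hab, hx2]
    · positivity
  have hlm : a*x1/s + b*x2/s = 1 := by field_simp; exact hs.symm
  have hconv := convexOn_exp.2 (Set.mem_univ (-y1/x1)) (Set.mem_univ (-y2/x2))
    (by positivity : (0:ℝ) ≤ a*x1/s) (by positivity : (0:ℝ) ≤ b*x2/s) hlm
  have harg : (a*x1/s) • (-y1/x1) + (b*x2/s) • (-y2/x2) = -(a*y1+b*y2)/s := by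
    field_simp; ring_nf; field_simp
  rw [harg] at hconv
  calc s * Real.exp (-(a*y1+b*y2)/s)
      ≤ s * ((a*x1/s) • Real.exp (-y1/x1) + (b*x2/s) • Real.exp (-y2/x2)) :=
        mul_le_mul_of_nonneg_left hconv hspos.le
    _ = a*(x1*Real.exp (-y1/x1)) + b*(x2*Real.exp (-y2/x2)) := by field_simp; ring_nf; field_simp

/-- Mixed case: one first coordinate is `0` with nonnegative second coordinate. -/
lemma key_mixed (x2 y1 y2 a b : ℝ) (hx2 : 0 < x2) (hy1 : 0 ≤ y1) (ha : 0 ≤ a)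
    (hb : 0 < b) :
    (b*x2) * Real.exp (-(a*y1+b*y2)/(b*x2)) ≤ b*(x2*Real.exp (-y2/x2)) := by
  have h : -(a*y1+b*y2)/(b*x2) ≤ -y2/x2 := by
    rw [div_le_div_iff₀ (by positivity) hx2]
    nlinarith [mul_nonneg (mul_nonneg ha hy1) hx2.le]
  calc (b*x2) * Real.exp (-(a*y1+b*y2)/(b*x2)) ≤ (b*x2) * Real.exp (-y2/x2) :=
        mul_le_mul_of_nonneg_left (Real.exp_le_exp.2 h) (by positivity)
    _ = b*(x2*Real.exp (-y2/x2)) := by ring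

/-- The function `f₁(x,y) = x·exp(-y/x)` for `x > 0`, with `f₁(0,y) = 0` for
`y ≥ 0` and `+∞` for `y < 0`. -/
noncomputable def f1 : ℝ × ℝ → EReal := fun p =>
  if 0 < p.1 then ((p.1 * Real.exp (-p.2 / p.1) : ℝ) : EReal)
  else if p.1 = 0 ∧ 0 ≤ p.2 then 0 else ⊤

/-- `f₁` is convex on its domain `{(x,y) : x ≥ 0}`. -/
theorem f1_convex :
    ∀ p q : ℝ × ℝ, 0 ≤ p.1 → 0 ≤ q.1 → ∀ a b : ℝ, 0 ≤ a → 0 ≤ b → a + b = 1 →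
      f1 (a • p + b • q) ≤ (a : EReal) * f1 p + (b : EReal) * f1 q := by
  intro p q hp hq a b ha hb hab
  obtain ⟨x1, y1⟩ := p
  obtain ⟨x2, y2⟩ := q
  simp only at hp hq
  rcases eq_or_lt_of_le ha with rfl | ha'
  · have hb1 : b = 1 := by linarith
    subst hb1
    simp [zero_mul, one_mul, one_smul, zero_smul]
  rcases eq_or_lt_of_le hb with rfl | hb'
  · have ha1 : a = 1 := by linarith
    subst ha1
    simp [zero_mul, one_mul, one_smul, zero_smul]
  have hane : (0:EReal) < (a:EReal) := by exact_mod_cast ha'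
  have hbne : (0:EReal) < (b:EReal) := by exact_mod_cast hb'
  have hgoal : (a • (x1, y1) + b • (x2, y2) : ℝ × ℝ) = (a*x1+b*x2, a*y1+b*y2) := by
    simp [Prod.ext_iff, smul_eq_mul]
  rw [hgoal]
  -- helper: if f1 p' = ⊤ on one side with positive weight, RHS = ⊤
  have fne_bot : ∀ r : ℝ × ℝ, ∀ c : ℝ, 0 < c → (c:EReal) * f1 r ≠ ⊥ := by
    intro r c hc
    unfold f1
    split_ifs with h h'
    · rw [← EReal.coe_mul]; exact EReal.coe_ne_bot _
    · simp
    · rw [EReal.mul_top_of_pos (by exact_mod_cast hc)]; simp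
  rcases eq_or_lt_of_le hp with hx1 | hx1 <;> rcases eq_or_lt_of_le hq with hx2 | hx2
  · -- x1 = 0, x2 = 0
    have e1 : x1 = 0 := hx1.symm
    have e2 : x2 = 0 := hx2.symm
    subst e1; subst e2
    rcases le_or_gt 0 y1 with hy1 | hy1
    · rcases le_or_gt 0 y2 with hy2 | hy2
      · have hy : 0 ≤ a*y1+b*y2 := by positivity
        simp [f1, hy1, hy2, hy]
      · -- f1 q = ⊤
        have h2 : f1 (0, y2) = ⊤ := by simp [f1, not_le.2 hy2]
        rw [h2, EReal.mul_top_of_pos hbne,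
          EReal.add_top_of_ne_bot (fne_bot (0, y1) a ha')]
        exact le_top
    · have h1 : f1 (0, y1) = ⊤ := by simp [f1, not_le.2 hy1]
      rw [h1, EReal.mul_top_of_pos hane, EReal.top_add_of_ne_bot (fne_bot (0, y2) b hb')]
      exact le_top
  · -- x1 = 0, x2 > 0
    have e1 : x1 = 0 := hx1.symm
    subst e1
    rcases le_or_gt 0 y1 with hy1 | hy1
    · have hs : 0 < a*0+b*x2 := by simpa using mul_pos hb' hx2
      have h1 : f1 (0, y1) = 0 := by simp [f1, hy1]
      have hs' : 0 < b*x2 := mul_pos hb' hx2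
      rw [h1]
      simp only [mul_zero, zero_add]
      rw [show f1 (b*x2, a*y1+b*y2)
          = (((b*x2) * Real.exp (-(a*y1+b*y2)/(b*x2)) : ℝ) : EReal) from if_pos hs',
        show f1 (x2, y2) = ((x2 * Real.exp (-y2/x2) : ℝ) : EReal) from if_pos hx2,
        ← EReal.coe_mul, EReal.coe_le_coe_iff]
      exact key_mixed x2 y1 y2 a b hx2 hy1 ha hb' 
    · have h1 : f1 (0, y1) = ⊤ := by simp [f1, not_le.2 hy1]
      rw [h1, EReal.mul_top_of_pos hane, EReal.top_add_of_ne_bot (fne_bot (x2, y2) b hb')]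
      exact le_top
  · -- x1 > 0, x2 = 0
    have e2 : x2 = 0 := hx2.symm
    subst e2
    rcases le_or_gt 0 y2 with hy2 | hy2
    · have hs : 0 < a*x1+b*0 := by simpa using mul_pos ha' hx1
      have h2 : f1 (0, y2) = 0 := by simp [f1, hy2]
      have hs' : 0 < a*x1 := mul_pos ha' hx1
      rw [h2]
      simp only [mul_zero, add_zero]
      rw [show f1 (a*x1, a*y1+b*y2)
          = (((a*x1) * Real.exp (-(a*y1+b*y2)/(a*x1)) : ℝ) : EReal) from if_pos hs',
        show f1 (x1, y1) = ((x1 * Real.exp (-y1/x1) : ℝ) : EReal) from if_pos hx1,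
        ← EReal.coe_mul, EReal.coe_le_coe_iff]
      have := key_mixed x1 y2 y1 b a hx1 hy2 hb ha'
      calc (a*x1) * Real.exp (-(a*y1+b*y2)/(a*x1))
          = (a*x1) * Real.exp (-(b*y2+a*y1)/(a*x1)) := by ring_nf
        _ ≤ a*(x1*Real.exp (-y1/x1)) := this
    · have h2 : f1 (0, y2) = ⊤ := by simp [f1, not_le.2 hy2]
      rw [h2, EReal.mul_top_of_pos hbne,
        EReal.add_top_of_ne_bot (fne_bot (x1, y1) a ha')]
      exact le_top
  · -- both positive
    have hs : 0 < a*x1+b*x2 := by positivity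
    rw [show f1 (a*x1+b*x2, a*y1+b*y2)
        = (((a*x1+b*x2) * Real.exp (-(a*y1+b*y2)/(a*x1+b*x2)) : ℝ) : EReal) from if_pos hs,
      show f1 (x1, y1) = ((x1 * Real.exp (-y1/x1) : ℝ) : EReal) from if_pos hx1,
      show f1 (x2, y2) = ((x2 * Real.exp (-y2/x2) : ℝ) : EReal) from if_pos hx2,
      ← EReal.coe_mul, ← EReal.coe_mul, ← EReal.coe_add, EReal.coe_le_coe_iff]
    exact key_real x1 x2 y1 y2 a b hx1 hx2 ha hb hab
end

section
/- The inequality η ≥ max{(uᵀy)², (uᵀy)²/(∑ᵢ xᵢ)} is valid for the set X_{R1} = {(x,y,η) ∈ {0,1}ⁿ × ℝⁿ⁺¹ : η ≥ (uᵀy)², yᵢ(1-xᵢ) = 0 for all i}; that is, every point of X_{R1} satisfies it (interpreting (uᵀy)²/0 as 0 when uᵀy = 0 and +∞ otherwise). -/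
/-! Since `x` is binary, `∑ xᵢ` is a natural number: either it is at least `1`, and then the
perspective term is at most `(uᵀy)²`, or it is `0`, and then `x = 0` forces `y = 0` by
complementarity. -/

open Finset

theorem sum_eq_card_filter_of_eq_zero_or_eq_one {ι R : Type*} [AddCommMonoidWithOne R]
    {s : Finset ι} {f : ι → R} [DecidablePred fun i => f i = 1]
    (hf : ∀ i ∈ s, f i = 0 ∨ f i = 1) : ∑ i ∈ s, f i = #{i ∈ s | f i = 1} := by
  rw [← sum_boole]
  refine sum_congr rfl fun i hi => ?_
  rcases hf i hi with h | h <;> simp [h]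

section OrderedSemiring

variable {ι R : Type*} [Semiring R] [PartialOrder R] {s : Finset ι} {f : ι → R}

theorem one_le_sum_of_eq_zero_or_eq_one [IsStrictOrderedRing R]
    (hf : ∀ i ∈ s, f i = 0 ∨ f i = 1) (hpos : 0 < ∑ i ∈ s, f i) : 1 ≤ ∑ i ∈ s, f i := by
  classical
  rw [sum_eq_card_filter_of_eq_zero_or_eq_one hf] at hpos ⊢
  exact Nat.one_le_cast.mpr (Nat.cast_pos.mp hpos)

theorem eq_zero_of_eq_zero_or_eq_one_of_sum_nonpos [IsOrderedRing R]
    (hf : ∀ i ∈ s, f i = 0 ∨ f i = 1) (hs : ¬0 < ∑ i ∈ s, f i) : ∀ i ∈ s, f i = 0 := by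
  have hnonneg : ∀ i ∈ s, 0 ≤ f i := fun i hi => by rcases hf i hi with h | h <;> simp [h]
  have hsum : ∑ i ∈ s, f i = 0 := (sum_nonneg hnonneg).eq_or_lt.elim Eq.symm (absurd · hs)
  exact (sum_eq_zero_iff_of_nonneg hnonneg).mp hsum

end OrderedSemiring

/-- The rank-one inequality `η ≥ max{(uᵀy)², (uᵀy)²/(∑ᵢ xᵢ)}` is valid for
the set `X_{R1}` of points with binary `x`, `η ≥ (uᵀy)²` and complementarity
`yᵢ(1-xᵢ) = 0`, with the perspective term extended by closure at `∑xᵢ = 0`. -/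
theorem rank_one_inequality_valid (n : ℕ) (u x y : Fin n → ℝ) (η : ℝ)
    (hx : ∀ i, x i = 0 ∨ x i = 1)
    (hη : (∑ i, u i * y i) ^ 2 ≤ η)
    (hcomp : ∀ i, y i * (1 - x i) = 0) :
    max (((∑ i, u i * y i) ^ 2 : ℝ) : EReal)
      (if 0 < ∑ i, x i then (((∑ i, u i * y i) ^ 2 / ∑ i, x i : ℝ) : EReal)
       else if (∑ i, u i * y i) = 0 then 0 else ⊤) ≤ (η : EReal) := by
  have hx' : ∀ i ∈ univ, x i = 0 ∨ x i = 1 := fun i _ => hx i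
  by_cases hs : 0 < ∑ i, x i
  · have hdiv : (∑ i, u i * y i) ^ 2 / ∑ i, x i ≤ η :=
      (div_le_self (sq_nonneg _) (one_le_sum_of_eq_zero_or_eq_one hx' hs)).trans hη
    rw [if_pos hs, max_le_iff]
    exact ⟨EReal.coe_le_coe hη, EReal.coe_le_coe hdiv⟩
  · have hy : ∀ i, y i = 0 := fun i => by
      simpa [eq_zero_of_eq_zero_or_eq_one_of_sum_nonpos hx' hs i (mem_univ i)] using hcomp i
    have huy : ∑ i, u i * y i = 0 := by simp [hy]
    rw [huy, zero_pow two_ne_zero] at hη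
    rw [if_neg hs, if_pos huy, huy, zero_pow two_ne_zero, max_le_iff]
    exact ⟨EReal.coe_le_coe hη, EReal.coe_nonneg.mpr hη⟩
end
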